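/- arXiv:2109.08854 — 3 statements merged into one kernel-verified Lean document; each statement's English description precedes it below -/
import Mathlib

section
/- An FSA S is not strongly periodically detectable if and only if in its ε-extended self-composition CC^ε_A(S) at least one of the following holds: (9) there is a reachable state (x,x̄) with x≠x̄ such that there is a transition sequence x→^{s1}x'→^{s2}x' in S for some s1∈(T_uo)*, s2∈(T_uo)^+, x'∈X; (10) there is a reachable transition cycle (x1,x̄1)→^{s1'}⋯→^{sn'}(x_{n+1},x̄_{n+1}) for some positive integer n such that (x1,x̄1)=(x_{n+1},x̄_{n+1}), x_i≠x̄_i for all i∈{1,…,n}, and ℓ(s_i')∈Σ for all i∈{1,…,n}. -/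
/-- A finite-state automaton (FSA) `S = (X, T, X0, δ, Σ, ℓ)`:
states `X`, events `T`, outputs `O` (the alphabet Σ), initial states `init`,
transition relation `delta`, and labeling function `label` where `none` encodes ε. -/
structure FSA (X T O : Type) where
  init : Set X
  delta : X → T → X → Prop
  label : T → Option O

/-- Composed events of the (ε-extended) self-composition: pairs of observable
events with the same label, unobservable events on the left/right component,
and the added ε event. -/
inductive CEvent (T : Type) where
  | both : T → T → CEvent T
  | left : T → CEvent T
  | right : T → CEvent T
  | eps : CEvent T

namespace FSA

variable {X T O : Type}

/-- Extension of `delta` to finite event sequences: `x →^s x'`. -/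
def Run (M : FSA X T O) : X → List T → X → Prop
  | x, [], x' => x = x'
  | x, t :: s, x' => ∃ y, M.delta x t y ∧ Run M y s x'

/-- The label sequence `ℓ(s)` of a finite event sequence. -/
def labelSeq (M : FSA X T O) (s : List T) : List O :=
  s.filterMap M.label

/-- Membership in `L^ω(S)`: infinite event sequences generated from some initial state. -/
def InLomega (M : FSA X T O) (s : ℕ → T) : Prop :=
  ∃ x : ℕ → X, x 0 ∈ M.init ∧ ∀ i, M.delta (x i) (s i) (x (i + 1))

/-- `s'` is a finite prefix of the infinite sequence `s`. -/
def IsPrefixOf (s' : List T) (s : ℕ → T) : Prop :=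
  ∀ i : Fin s'.length, s'.get i = s i

/-- The current-state estimate `M(S,σ)`. -/
def est (M : FSA X T O) (σ : List O) : Set X :=
  {x | ∃ x0 ∈ M.init, ∃ s : List T, M.labelSeq s = σ ∧ M.Run x0 s x}

/-- Strong periodic detectability (SPD). -/
def SPD (M : FSA X T O) : Prop :=
  ∃ k : ℕ, 0 < k ∧ ∀ s : ℕ → T, M.InLomega s → ∀ s' : List T, IsPrefixOf s' s →
    ∃ s'' : List T, (M.labelSeq s'').length < k ∧ IsPrefixOf (s' ++ s'') s ∧
      (M.est (M.labelSeq (s' ++ s''))).ncard = 1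

/-- Strong periodic D-detectability with respect to `Tspec`. -/
def SPDD (M : FSA X T O) (Tspec : Set (X × X)) : Prop :=
  ∃ k : ℕ, 0 < k ∧ ∀ s : ℕ → T, M.InLomega s → ∀ s' : List T, IsPrefixOf s' s →
    ∃ s'' : List T, (M.labelSeq s'').length < k ∧ IsPrefixOf (s' ++ s'') s ∧
      (M.est (M.labelSeq (s' ++ s'')) ×ˢ M.est (M.labelSeq (s' ++ s''))) ∩ Tspec = ∅

/-- An unobservable transition sequence `x →^s x'` (all events labeled ε). -/
def UnobsRun (M : FSA X T O) (x : X) (s : List T) (x' : X) : Prop :=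
  M.Run x s x' ∧ ∀ t ∈ s, M.label t = none

/-- Unobservable reach `UR` of a set of states. -/
def UR (M : FSA X T O) (q : Set X) : Set X :=
  {x' | ∃ x ∈ q, ∃ s : List T, M.UnobsRun x s x'}

/-- Observable reach `Reach_σ` of a set of states. -/
def ReachO (M : FSA X T O) (σ : O) (q : Set X) : Set X :=
  {x' | ∃ x ∈ q, ∃ t : T, M.delta x t x' ∧ M.label t = some σ}

/-- Initial state `M(S,ε) = UR(X0)` of the observer/detector. -/
def obsInit (M : FSA X T O) : Set X := M.UR M.init

/-- Observer transition `δ_obs(q,σ) = UR(Reach_σ(q))` (defined when nonempty). -/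
def obsTrans (M : FSA X T O) (q : Set X) (σ : O) (q' : Set X) : Prop :=
  q' = M.UR (M.ReachO σ q) ∧ q'.Nonempty

/-- Sequences of observer transitions. -/
def ObsRun (M : FSA X T O) : Set X → List O → Set X → Prop
  | q, [], q' => q = q'
  | q, σ :: w, q' => ∃ q1, M.obsTrans q σ q1 ∧ ObsRun M q1 w q'

/-- Reachable states of the observer `S_obs`. -/
def ObsReachable (M : FSA X T O) (q : Set X) : Prop :=
  ∃ w : List O, M.ObsRun M.obsInit w q

/-- Detector transition relation `δ_det`. -/
def detTrans (M : FSA X T O) (q : Set X) (σ : O) (q' : Set X) : Prop :=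
  (1 < (M.UR (M.ReachO σ q)).ncard ∧ q' ⊆ M.UR (M.ReachO σ q) ∧ q'.ncard = 2) ∨
  ((M.UR (M.ReachO σ q)).ncard = 1 ∧ q' = M.UR (M.ReachO σ q))

/-- Sequences of detector transitions. -/
def DetRun (M : FSA X T O) : Set X → List O → Set X → Prop
  | q, [], q' => q = q'
  | q, σ :: w, q' => ∃ q1, M.detTrans q σ q1 ∧ DetRun M q1 w q'

/-- Reachable states of the detector `S_det`. -/
def DetReachable (M : FSA X T O) (q : Set X) : Prop :=
  ∃ w : List O, M.DetRun M.obsInit w q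

/-- The label of a composed event. -/
def cLabel (M : FSA X T O) : CEvent T → Option O
  | CEvent.both t _ => M.label t
  | CEvent.left _ => none
  | CEvent.right _ => none
  | CEvent.eps => none

/-- The label sequence of a sequence of composed events. -/
def ccLabelSeq (M : FSA X T O) (s : List (CEvent T)) : List O :=
  s.filterMap M.cLabel

/-- Transition relation `δ'` of the self-composition `CC_A(S)`. -/
def ccTrans (M : FSA X T O) : X × X → CEvent T → X × X → Prop
  | p, CEvent.both t t', p' =>
      M.delta p.1 t p'.1 ∧ M.delta p.2 t' p'.2 ∧
      ∃ σ : O, M.label t = some σ ∧ M.label t' = some σ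
  | p, CEvent.left t, p' => M.delta p.1 t p'.1 ∧ M.label t = none ∧ p.2 = p'.2
  | p, CEvent.right t, p' => p.1 = p'.1 ∧ M.label t = none ∧ M.delta p.2 t p'.2
  | _, CEvent.eps, _ => False

/-- Transition relation of the ε-extended self-composition `CC^ε_A(S)`:
all transitions of `CC_A(S)` plus, for `x1 ≠ x2`, the added ε-transitions
`((x1,x2),ε,(x1,x1))` and `((x1,x2),ε,(x2,x2))` under the stated conditions. -/
def ccEpsTrans (M : FSA X T O) (p : X × X) (e : CEvent T) (p' : X × X) : Prop :=
  M.ccTrans p e p' ∨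
  (e = CEvent.eps ∧ p.1 ≠ p.2 ∧ (p' = (p.1, p.1) ∨ p' = (p.2, p.2)) ∧
    ∃ (t' : CEvent T) (r : X × X),
      M.ccTrans p' t' r ∧ ∀ t'' : CEvent T, ¬ M.ccTrans p t'' r)

/-- Sequences of transitions of `CC^ε_A(S)`. -/
def CCRun (M : FSA X T O) : X × X → List (CEvent T) → X × X → Prop
  | p, [], p' => p = p'
  | p, e :: s, p' => ∃ r, M.ccEpsTrans p e r ∧ CCRun M r s p'

/-- Reachable states of `CC^ε_A(S)` (from `X0 × X0`). -/
def CCReachable (M : FSA X T O) (p : X × X) : Prop :=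
  ∃ p0 : X × X, p0.1 ∈ M.init ∧ p0.2 ∈ M.init ∧ ∃ s : List (CEvent T), M.CCRun p0 s p

/-- A state is reachable in `S`. -/
def StateReachable (M : FSA X T O) (x : X) : Prop :=
  ∃ x0 ∈ M.init, ∃ s : List T, M.Run x0 s x

/-- Deadlock-freeness. -/
def DeadlockFree (M : FSA X T O) : Prop :=
  ∀ x : X, M.StateReachable x → ∃ (t : T) (x' : X), M.delta x t x'

/-- Divergence-freeness (promptness): no reachable unobservable transition cycle. -/
def DivergenceFree (M : FSA X T O) : Prop :=
  ∀ x : X, M.StateReachable x → ∀ s : List T, s ≠ [] →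
    (∀ t ∈ s, M.label t = none) → ¬ M.Run x s x

end FSA

/-!
If (9) holds, follow a run to `x` by the unobservable cycle forever: the estimate never changes
again and keeps containing `x ≠ x̄`. If (10) holds, the cycle can be repeated, and every prefix
of the label word read along the repetitions leaves two distinct states in the estimate; a
pigeonhole over the states of `S` reached after each repetition turns this into a lasso run of
`S` along which the state is never determined.

Conversely, if `S` is not SPD there is a run along which the estimate stays ambiguous while the
next `|X|²` observations go by. If the run makes fewer observations than that, its unobservable
tail runs into a cycle, which gives (9). Otherwise walk backwards from the last ambiguous
estimate: a pair of states in one estimate is reached from a pair of *distinct* states in the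
previous one, either by a segment of `CC^ε_A(S)` with exactly one observation or by an
unobservable move of `S`; the added ε-transitions keep the pair distinct when the two backward
runs merge. A pigeonhole on pairs closes a cycle of such steps. If the cycle contains an
observation it regroups into the segments of (10); otherwise its unobservable moves form an
unobservable cycle of `S`, which is (9).
-/

theorem List.flatten_replicate_flatten_replicate {α : Type*} (l : List α) (m q : ℕ) :
    (List.replicate q (List.replicate m l).flatten).flatten =
      (List.replicate (m * q) l).flatten := by
  induction q with
  | zero => simp
  | succ q ih =>
    rw [List.replicate_succ', List.flatten_concat, ih, Nat.mul_succ, List.replicate_add,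
      List.flatten_append]

theorem exists_chain_of_backward {α : Type*} {R : α → α → Prop} {P : ℕ → α → Prop} {L : ℕ}
    (hback : ∀ j < L, ∀ b, P (j + 1) b → ∃ a, P j a ∧ R a b) {b : α} (hb : P L b) :
    ∃ f : ℕ → α, f L = b ∧ (∀ j ≤ L, P j (f j)) ∧ ∀ j < L, R (f j) (f (j + 1)) := by
  induction L generalizing b with
  | zero => exact ⟨fun _ => b, rfl, by simpa using hb, by simp⟩
  | succ L ih =>
    obtain ⟨a, ha, hab⟩ := hback L (by omega) b hb
    obtain ⟨f, rfl, hfP, hfR⟩ := ih (fun j hj => hback j (by omega)) ha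
    refine ⟨Function.update f (L + 1) b, by simp, fun j hj => ?_, fun j hj => ?_⟩
    · rcases Nat.lt_or_eq_of_le hj with hj | rfl
      · simpa [Function.update_of_ne (by omega : j ≠ L + 1)] using hfP j (by omega)
      · simpa using hb
    · rcases Nat.lt_or_eq_of_le (Nat.le_of_lt_succ hj) with hj | rfl
      · simpa [Function.update_of_ne (by omega : j ≠ L + 1),
          Function.update_of_ne (by omega : j + 1 ≠ L + 1)] using hfR j hj
      · simpa using hab

open Relation in
theorem exists_transGen_cycle_of_chain {α : Type*} [Fintype α] {R : α → α → Prop}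
    {P : ℕ → α → Prop} {L : ℕ} (hL : Fintype.card α ≤ L)
    (hback : ∀ j < L, ∀ b, P (j + 1) b → ∃ a, P j a ∧ R a b) {b : α} (hb : P L b) :
    ∃ j a, P j a ∧ TransGen R a a := by
  obtain ⟨f, -, hfP, hfR⟩ := exists_chain_of_backward hback hb
  have hcycle : ∀ i j, i < j → j ≤ L → f i = f j → ∃ j a, P j a ∧ TransGen R a a := by
    intro i j hij hj hfij
    have hpath : TransGen R (f i) (f j) := TransGen.lift f (fun _ _ h => h) _ _
      (transGen_of_succ_of_lt (fun k l => R (f k) (f l))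
        (fun k hk => by simpa using hfR k (by have := (Set.mem_Ico.1 hk).2; omega)) hij)
    rw [← hfij] at hpath
    exact ⟨i, f i, hfP i (by omega), hpath⟩
  obtain ⟨i, j, hij, hfij⟩ := Fintype.exists_ne_map_eq_of_card_lt (fun i : Fin (L + 1) => f i)
    (by rw [Fintype.card_fin]; omega)
  rcases Nat.lt_or_gt_of_ne (Fin.val_ne_of_ne hij) with hij | hij
  · exact hcycle i j hij (by omega) hfij
  · exact hcycle j i hij (by omega) hfij.symm

theorem Stream'.take_mul_length_cycle {α : Type*} (l : List α) (hl : l ≠ []) (q : ℕ) :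
    (Stream'.cycle l hl).take (q * l.length) = (List.replicate q l).flatten := by
  induction q with
  | zero => simp
  | succ q ih =>
    rw [Nat.succ_mul, Nat.add_comm, Stream'.cycle_eq, ← Stream'.append_take, ih]
    simp [List.replicate_succ]

namespace FSA

variable {X T O : Type} {M : FSA X T O}

open Relation

section Runs

theorem run_nil {x y : X} : M.Run x [] y ↔ x = y := Iff.rfl

theorem run_cons {x y : X} {t : T} {u : List T} :
    M.Run x (t :: u) y ↔ ∃ z, M.delta x t z ∧ M.Run z u y := Iff.rfl

theorem run_append {x z : X} {u v : List T} :
    M.Run x (u ++ v) z ↔ ∃ y, M.Run x u y ∧ M.Run y v z := by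
  induction u generalizing x with
  | nil => simp [run_nil]
  | cons t u ih => simp only [List.cons_append, run_cons, ih]; grind

theorem run_singleton {x y : X} {t : T} : M.Run x [t] y ↔ M.delta x t y := by
  simp [run_cons, run_nil]

@[simp] theorem labelSeq_nil : M.labelSeq [] = [] := rfl

theorem labelSeq_cons (t : T) (u : List T) :
    M.labelSeq (t :: u) = (M.label t).toList ++ M.labelSeq u := by
  cases h : M.label t <;> simp [labelSeq, h]

@[simp] theorem labelSeq_append (u v : List T) :
    M.labelSeq (u ++ v) = M.labelSeq u ++ M.labelSeq v :=
  List.filterMap_append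

theorem labelSeq_eq_nil {u : List T} : M.labelSeq u = [] ↔ ∀ t ∈ u, M.label t = none := by
  simp [labelSeq, List.filterMap_eq_nil_iff]

theorem labelSeq_flatten_replicate (q : ℕ) (u : List T) :
    M.labelSeq (List.replicate q u).flatten = (List.replicate q (M.labelSeq u)).flatten := by
  induction q with
  | zero => rfl
  | succ q ih => simp [List.replicate_succ, ih]

theorem exists_prefix_labelSeq_eq {τ : List O} {u : List T} (h : τ <+: M.labelSeq u) :
    ∃ u', u' <+: u ∧ M.labelSeq u' = τ := by
  induction u generalizing τ with
  | nil => exact ⟨[], List.prefix_rfl, (List.prefix_nil.1 h).symm⟩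
  | cons t u ih =>
    rcases τ with _ | ⟨μ, τ⟩
    · exact ⟨[], List.nil_prefix, rfl⟩
    rw [labelSeq_cons] at h
    cases ht : M.label t with
    | none =>
      obtain ⟨u', hu', hℓ⟩ := ih (by simpa [ht] using h)
      exact ⟨t :: u', (List.prefix_cons_inj t).2 hu', by simp [labelSeq_cons, ht, hℓ]⟩
    | some ν =>
      simp only [ht, Option.toList_some, List.singleton_append, List.cons_prefix_cons] at h
      obtain ⟨u', hu', hℓ⟩ := ih h.2
      exact ⟨t :: u', (List.prefix_cons_inj t).2 hu', by simp [labelSeq_cons, ht, h.1, hℓ]⟩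

theorem unobsRun_iff {x y : X} {u : List T} :
    M.UnobsRun x u y ↔ M.Run x u y ∧ M.labelSeq u = [] := by
  rw [labelSeq_eq_nil]; rfl

theorem unobsRun_cons {x y : X} {t : T} {u : List T} :
    M.UnobsRun x (t :: u) y ↔ M.label t = none ∧ ∃ z, M.delta x t z ∧ M.UnobsRun z u y := by
  simp only [UnobsRun, run_cons, List.forall_mem_cons]
  grind

theorem UnobsRun.append {x y z : X} {u v : List T} (hu : M.UnobsRun x u y)
    (hv : M.UnobsRun y v z) : M.UnobsRun x (u ++ v) z := by
  rw [unobsRun_iff] at *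
  exact ⟨run_append.2 ⟨y, hu.1, hv.1⟩, by simp [hu.2, hv.2]⟩

theorem exists_of_run_of_labelSeq_eq_cons {x z : X} {u : List T} {μ : O} {τ : List O}
    (hu : M.Run x u z) (hℓ : M.labelSeq u = μ :: τ) :
    ∃ y y' t v₁ v₂, M.UnobsRun x v₁ y ∧ M.delta y t y' ∧ M.label t = some μ ∧
      M.Run y' v₂ z ∧ M.labelSeq v₂ = τ := by
  induction u generalizing x with
  | nil => simp at hℓ
  | cons t u ih =>
    obtain ⟨x', hx, hu⟩ := run_cons.1 hu
    rw [labelSeq_cons] at hℓ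
    cases ht : M.label t with
    | none =>
      obtain ⟨y, y', t', v₁, v₂, hv₁, h⟩ := ih hu (by simpa [ht] using hℓ)
      refine ⟨y, y', t', t :: v₁, v₂, unobsRun_iff.2 ⟨run_cons.2 ⟨x', hx, ?_⟩, ?_⟩, h⟩
      · exact (unobsRun_iff.1 hv₁).1
      · simp [labelSeq_cons, ht, (unobsRun_iff.1 hv₁).2]
    | some ν =>
      simp only [ht, Option.toList_some, List.singleton_append, List.cons.injEq] at hℓ
      exact ⟨x, x', t, [], u, unobsRun_iff.2 ⟨rfl, rfl⟩, hx, hℓ.1 ▸ ht, hu, hℓ.2⟩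

theorem exists_of_run_of_labelSeq_eq_append {x z : X} {u : List T} {α β : List O}
    (hu : M.Run x u z) (hℓ : M.labelSeq u = α ++ β) :
    ∃ y u₁ u₂, M.Run x u₁ y ∧ M.labelSeq u₁ = α ∧ M.Run y u₂ z ∧ M.labelSeq u₂ = β := by
  induction α generalizing x u with
  | nil => exact ⟨x, [], u, rfl, rfl, hu, hℓ⟩
  | cons μ α ih =>
    obtain ⟨y, y', t, v₁, v₂, hv₁, ht, hμ, hv₂, hℓ₂⟩ := exists_of_run_of_labelSeq_eq_cons hu hℓ
    obtain ⟨w, u₁, u₂, hu₁, rfl, hu₂, rfl⟩ := ih hv₂ hℓ₂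
    refine ⟨w, v₁ ++ t :: u₁, u₂, ?_, ?_, hu₂, rfl⟩
    · exact run_append.2 ⟨y, (unobsRun_iff.1 hv₁).1, run_cons.2 ⟨y', ht, hu₁⟩⟩
    · simp [labelSeq_cons, (unobsRun_iff.1 hv₁).2, hμ]

end Runs

section Estimate

theorem mem_est_nil {x : X} (hx : x ∈ M.init) : x ∈ M.est [] := ⟨x, hx, [], rfl, rfl⟩

theorem mem_est_of_run {σ : List O} {x y : X} {v : List T} (hx : x ∈ M.est σ)
    (hv : M.Run x v y) : y ∈ M.est (σ ++ M.labelSeq v) := by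
  obtain ⟨x₀, hx₀, u, rfl, hu⟩ := hx
  exact ⟨x₀, hx₀, u ++ v, labelSeq_append u v, run_append.2 ⟨x, hu, hv⟩⟩

theorem mem_est_of_unobsRun {σ : List O} {x y : X} {v : List T} (hx : x ∈ M.est σ)
    (hv : M.UnobsRun x v y) : y ∈ M.est σ := by
  simpa [(unobsRun_iff.1 hv).2] using mem_est_of_run hx (unobsRun_iff.1 hv).1

theorem mem_est_append_iff {σ τ : List O} {z : X} :
    z ∈ M.est (σ ++ τ) ↔ ∃ y ∈ M.est σ, ∃ v, M.Run y v z ∧ M.labelSeq v = τ := by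
  constructor
  · rintro ⟨x₀, hx₀, u, hℓ, hu⟩
    obtain ⟨y, u₁, u₂, hu₁, hℓ₁, hu₂, hℓ₂⟩ := exists_of_run_of_labelSeq_eq_append hu hℓ
    exact ⟨y, ⟨x₀, hx₀, u₁, hℓ₁, hu₁⟩, u₂, hu₂, hℓ₂⟩
  · rintro ⟨y, hy, v, hv, rfl⟩
    exact mem_est_of_run hy hv

theorem exists_of_mem_est_concat {σ : List O} {μ : O} {z : X} (hz : z ∈ M.est (σ ++ [μ])) :
    ∃ y ∈ M.est σ, ∃ t y' v, M.delta y t y' ∧ M.label t = some μ ∧ M.UnobsRun y' v z := by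
  obtain ⟨x, hx, u, hu, hℓ⟩ := mem_est_append_iff.1 hz
  obtain ⟨y, y', t, v₁, v₂, hv₁, ht, hμ, hv₂, hℓ₂⟩ := exists_of_run_of_labelSeq_eq_cons hu hℓ
  exact ⟨y, mem_est_of_unobsRun hx hv₁, t, y', v₂, ht, hμ, unobsRun_iff.2 ⟨hv₂, hℓ₂⟩⟩

end Estimate

section SelfComposition

theorem ccRun_nil {p q : X × X} : M.CCRun p [] q ↔ p = q := Iff.rfl

theorem ccRun_cons {p q : X × X} {e : CEvent T} {w : List (CEvent T)} :
    M.CCRun p (e :: w) q ↔ ∃ r, M.ccEpsTrans p e r ∧ M.CCRun r w q := Iff.rfl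

theorem ccRun_append {p q r : X × X} {u v : List (CEvent T)} (hu : M.CCRun p u q)
    (hv : M.CCRun q v r) : M.CCRun p (u ++ v) r := by
  induction u generalizing p with
  | nil => rwa [ccRun_nil.1 hu]
  | cons e u ih =>
    obtain ⟨p', he, hu⟩ := ccRun_cons.1 hu
    exact ccRun_cons.2 ⟨p', he, ih hu⟩

@[simp] theorem ccLabelSeq_append (u v : List (CEvent T)) :
    M.ccLabelSeq (u ++ v) = M.ccLabelSeq u ++ M.ccLabelSeq v :=
  List.filterMap_append

theorem ccLabelSeq_cons (e : CEvent T) (w : List (CEvent T)) :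
    M.ccLabelSeq (e :: w) = (M.cLabel e).toList ++ M.ccLabelSeq w := by
  cases h : M.cLabel e <;> simp [ccLabelSeq, h]

theorem ccRun_map_left {a a' b : X} {u : List T} (hu : M.UnobsRun a u a') :
    M.CCRun (a, b) (u.map CEvent.left) (a', b) := by
  induction u generalizing a with
  | nil => rw [(unobsRun_iff.1 hu).1]; rfl
  | cons t u ih =>
    obtain ⟨ht, z, hz, hu⟩ := unobsRun_cons.1 hu
    exact ccRun_cons.2 ⟨(z, b), Or.inl ⟨hz, ht, rfl⟩, ih hu⟩

theorem ccRun_map_right {a b b' : X} {v : List T} (hv : M.UnobsRun b v b') :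
    M.CCRun (a, b) (v.map CEvent.right) (a, b') := by
  induction v generalizing b with
  | nil => rw [(unobsRun_iff.1 hv).1]; rfl
  | cons t v ih =>
    obtain ⟨ht, z, hz, hv⟩ := unobsRun_cons.1 hv
    exact ccRun_cons.2 ⟨(a, z), Or.inl ⟨rfl, ht, hz⟩, ih hv⟩

@[simp] theorem ccLabelSeq_map_left (u : List T) : M.ccLabelSeq (u.map CEvent.left) = [] := by
  simp [ccLabelSeq, List.filterMap_map, Function.comp_def, cLabel]

@[simp] theorem ccLabelSeq_map_right (u : List T) : M.ccLabelSeq (u.map CEvent.right) = [] := by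
  simp [ccLabelSeq, List.filterMap_map, Function.comp_def, cLabel]

theorem ccRun_of_unobsRun {a a' b b' : X} {u v : List T} (hu : M.UnobsRun a u a')
    (hv : M.UnobsRun b v b') :
    M.CCRun (a, b) (u.map CEvent.left ++ v.map CEvent.right) (a', b') :=
  ccRun_append (ccRun_map_left hu) (ccRun_map_right hv)

theorem mem_est_of_ccEpsTrans {σ : List O} {p q : X × X} {e : CEvent T}
    (hp : p.1 ∈ M.est σ ∧ p.2 ∈ M.est σ) (he : M.ccEpsTrans p e q) :
    q.1 ∈ M.est (σ ++ (M.cLabel e).toList) ∧ q.2 ∈ M.est (σ ++ (M.cLabel e).toList) := by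
  have step {x y : X} {t : T} (hx : x ∈ M.est σ) (ht : M.delta x t y) :
      y ∈ M.est (σ ++ (M.label t).toList) := by
    simpa [labelSeq_cons] using mem_est_of_run hx (run_singleton.2 ht)
  obtain ⟨q₁, q₂⟩ := q
  rcases he with he | ⟨rfl, -, he | he, -⟩
  · cases e with
    | both t t' =>
      obtain ⟨h₁, h₂, μ, hμ, hμ'⟩ := he
      exact ⟨step hp.1 h₁, by simpa [cLabel, hμ, hμ'] using step hp.2 h₂⟩
    | left t =>
      obtain ⟨h₁, ht, rfl⟩ := he
      simpa [cLabel, ht] using And.intro (step hp.1 h₁) hp.2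
    | right t =>
      obtain ⟨rfl, ht, h₂⟩ := he
      simpa [cLabel, ht] using And.intro hp.1 (step hp.2 h₂)
    | eps => exact he.elim
  all_goals simp_all [cLabel]

theorem mem_est_of_ccRun {σ : List O} {p q : X × X} {w : List (CEvent T)}
    (hp : p.1 ∈ M.est σ ∧ p.2 ∈ M.est σ) (hw : M.CCRun p w q) :
    q.1 ∈ M.est (σ ++ M.ccLabelSeq w) ∧ q.2 ∈ M.est (σ ++ M.ccLabelSeq w) := by
  induction w generalizing p σ with
  | nil => rw [← ccRun_nil.1 hw]; simpa [ccLabelSeq] using hp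
  | cons e w ih =>
    obtain ⟨r, he, hw⟩ := ccRun_cons.1 hw
    simpa [ccLabelSeq_cons] using ih (mem_est_of_ccEpsTrans hp he) hw

theorem exists_ccRun_of_labelSeq_eq {x x' y y' : X} {u v : List T} (hu : M.Run x u x')
    (hv : M.Run y v y') (hℓ : M.labelSeq u = M.labelSeq v) :
    ∃ w, M.CCRun (x, y) w (x', y') := by
  generalize hσ : M.labelSeq v = σ at hℓ
  induction σ generalizing x y u v with
  | nil =>
    exact ⟨_, ccRun_of_unobsRun (unobsRun_iff.2 ⟨hu, hℓ⟩) (unobsRun_iff.2 ⟨hv, hσ⟩)⟩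
  | cons μ σ ih =>
    obtain ⟨a, a', t, u₁, u₂, hu₁, ht, hμ, hu₂, hℓ₂⟩ := exists_of_run_of_labelSeq_eq_cons hu hℓ
    obtain ⟨b, b', t', v₁, v₂, hv₁, ht', hμ', hv₂, hσ₂⟩ := exists_of_run_of_labelSeq_eq_cons hv hσ
    obtain ⟨w, hw⟩ := ih hu₂ hv₂ hσ₂ hℓ₂
    have hboth : M.ccEpsTrans (a, b) (CEvent.both t t') (a', b') := Or.inl ⟨ht, ht', μ, hμ, hμ'⟩
    exact ⟨_, ccRun_append (ccRun_of_unobsRun hu₁ hv₁) (ccRun_cons.2 ⟨_, hboth, hw⟩)⟩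

theorem ccReachable_iff {p : X × X} :
    M.CCReachable p ↔ ∃ σ, p.1 ∈ M.est σ ∧ p.2 ∈ M.est σ := by
  constructor
  · rintro ⟨p₀, h₁, h₂, w, hw⟩
    exact ⟨_, by simpa using mem_est_of_ccRun ⟨mem_est_nil h₁, mem_est_nil h₂⟩ hw⟩
  · rintro ⟨σ, ⟨x₀, hx₀, u, rfl, hu⟩, ⟨y₀, hy₀, v, hv, hv'⟩⟩
    obtain ⟨w, hw⟩ := exists_ccRun_of_labelSeq_eq hu hv' hv.symm
    exact ⟨(x₀, y₀), hx₀, hy₀, w, hw⟩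

theorem CCReachable.swap {p : X × X} (h : M.CCReachable p) : M.CCReachable p.swap := by
  obtain ⟨σ, h₁, h₂⟩ := ccReachable_iff.1 h
  exact ccReachable_iff.2 ⟨σ, h₂, h₁⟩

theorem CCReachable.of_ccRun {p q : X × X} {w : List (CEvent T)} (hp : M.CCReachable p)
    (hw : M.CCRun p w q) : M.CCReachable q := by
  obtain ⟨p₀, h₁, h₂, u, hu⟩ := hp
  exact ⟨p₀, h₁, h₂, u ++ w, ccRun_append hu hw⟩

end SelfComposition

section InfiniteRuns

def IsInfRun (M : FSA X T O) (xs : ℕ → X) (s : Stream' T) : Prop :=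
  ∀ i, M.delta (xs i) (s.get i) (xs (i + 1))

theorem IsInfRun.run_take {xs : ℕ → X} {s : Stream' T} (h : M.IsInfRun xs s) (n : ℕ) :
    M.Run (xs 0) (s.take n) (xs n) := by
  induction n with
  | zero => rfl
  | succ n ih => rw [Stream'.take_succ']; exact run_append.2 ⟨xs n, ih, run_singleton.2 (h n)⟩

theorem IsInfRun.drop {xs : ℕ → X} {s : Stream' T} (h : M.IsInfRun xs s) (a : ℕ) :
    M.IsInfRun (fun i => xs (a + i)) (s.drop a) := fun i => by
  simpa [Stream'.get_drop, Nat.add_assoc] using h (a + i)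

theorem exists_isInfRun_of_invariant (P : X → Stream' T → Prop)
    (hP : ∀ x s, P x s → ∃ y, M.delta x s.head y ∧ P y s.tail) {x : X} {s : Stream' T}
    (h : P x s) : ∃ xs, xs 0 = x ∧ M.IsInfRun xs s := by
  choose next hnext using hP
  let states : ℕ → {xs : X × Stream' T // P xs.1 xs.2} := fun n =>
    n.rec ⟨(x, s), h⟩ fun _ q => ⟨(next _ _ q.2, q.1.2.tail), (hnext _ _ q.2).2⟩
  have hstream : ∀ n, (states n).1.2 = s.drop n := by
    intro n
    induction n with
    | zero => rfl
    | succ n ih =>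
      change (states n).1.2.tail = _
      rw [ih, Stream'.tail_drop']
  refine ⟨fun n => (states n).1.1, rfl, fun n => ?_⟩
  have hhead : (states n).1.2.head = s.get n := by rw [hstream, Stream'.head_drop]
  have hstep := (hnext _ _ (states n).2).1
  rwa [hhead] at hstep

theorem exists_isInfRun_lasso {x y : X} {u c : List T} (hu : M.Run x u y) (hc : M.Run y c y)
    (hc₀ : c ≠ []) : ∃ xs, xs 0 = x ∧ M.IsInfRun xs (u ++ₛ Stream'.cycle c hc₀) := by
  refine exists_isInfRun_of_invariant
    (fun x s => ∃ v, M.Run x v y ∧ s = v ++ₛ Stream'.cycle c hc₀) ?_ ⟨u, hu, rfl⟩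
  rintro x s ⟨v, hv, rfl⟩
  obtain ⟨t, v', hv, hs⟩ : ∃ t v', M.Run x (t :: v') y ∧
      v ++ₛ Stream'.cycle c hc₀ = (t :: v') ++ₛ Stream'.cycle c hc₀ := by
    rcases v with _ | ⟨t, v'⟩
    · obtain ⟨t, v', rfl⟩ := List.exists_cons_of_ne_nil hc₀
      exact ⟨t, v', run_nil.1 hv ▸ hc, Stream'.cycle_eq _ _⟩
    · exact ⟨t, v', hv, rfl⟩
  obtain ⟨z, hz, hv'⟩ := run_cons.1 hv
  exact ⟨z, by simpa [hs] using hz, v', hv', by simp [hs, Stream'.cons_append_stream]⟩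

theorem isPrefixOf_iff_take {v : List T} {s : Stream' T} :
    IsPrefixOf v s ↔ s.take v.length = v := by
  change (∀ i : Fin v.length, v.get i = s.get i) ↔ _
  constructor
  · intro h
    refine List.ext_getElem (by simp) fun i h₁ h₂ => ?_
    simpa using (h ⟨i, h₂⟩).symm
  · intro h i
    have := Stream'.take_get (a := s) (n := v.length) (m := i) (by simp)
    simp only [h] at this
    simpa using this

theorem IsPrefixOf.of_append {u v : List T} {s : Stream' T} (h : IsPrefixOf (u ++ v) (u ++ₛ s)) :
    IsPrefixOf v s := by
  have h := isPrefixOf_iff_take.1 h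
  rw [List.length_append, ← Stream'.append_take] at h
  exact isPrefixOf_iff_take.2 (List.append_cancel_left h)

theorem IsPrefixOf.prefix_flatten_replicate_of_cycle {v c : List T} {hc : c ≠ []}
    (h : IsPrefixOf v (Stream'.cycle c hc)) : v <+: (List.replicate v.length c).flatten := by
  calc v = (Stream'.cycle c hc).take v.length := (isPrefixOf_iff_take.1 h).symm
    _ <+: (Stream'.cycle c hc).take (v.length * c.length) :=
      Stream'.take_prefix_take_left _ _ _ (Nat.le_mul_of_pos_right _ (List.length_pos_iff.2 hc))
    _ = _ := Stream'.take_mul_length_cycle c hc _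

end InfiniteRuns

section Lassos

theorem not_spd_of_lasso [Finite X] {x₀ y : X} {u c : List T} (hx₀ : x₀ ∈ M.init)
    (hu : M.Run x₀ u y) (hc : M.Run y c y) (hc₀ : c ≠ [])
    (hest : ∀ q v, v <+: (List.replicate q c).flatten →
      (M.est (M.labelSeq (u ++ v))).Nontrivial) : ¬ M.SPD := by
  rintro ⟨k, -, hk⟩
  obtain ⟨xs, hxs₀, hxs⟩ := exists_isInfRun_lasso hu hc hc₀
  have hpre : IsPrefixOf u (u ++ₛ Stream'.cycle c hc₀) :=
    isPrefixOf_iff_take.2 (by simp [Stream'.take_append_of_le_length])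
  obtain ⟨v, -, hv, hone⟩ := hk _ ⟨xs, hxs₀ ▸ hx₀, hxs⟩ u hpre
  exact (Set.one_lt_ncard_iff_nontrivial.2
    (hest _ v hv.of_append.prefix_flatten_replicate_of_cycle)).ne' hone

def ReachesUnobsCycle (M : FSA X T O) (x : X) : Prop :=
  ∃ (x' : X) (s₁ s₂ : List T), M.UnobsRun x s₁ x' ∧ s₂ ≠ [] ∧ M.UnobsRun x' s₂ x'

theorem not_spd_of_reachesUnobsCycle [Finite X] {p : X × X} (hp : M.CCReachable p)
    (hne : p.1 ≠ p.2) (hcyc : M.ReachesUnobsCycle p.1) : ¬ M.SPD := by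
  obtain ⟨σ, ⟨x₀, hx₀, u, rfl, hu⟩, h₂⟩ := ccReachable_iff.1 hp
  obtain ⟨x', s₁, s₂, hs₁, hs₂, hcyc⟩ := hcyc
  refine not_spd_of_lasso hx₀ (run_append.2 ⟨p.1, hu, hs₁.1⟩) hcyc.1 hs₂ fun q v hv => ?_
  have hv : M.labelSeq v <+: M.labelSeq (List.replicate q s₂).flatten := hv.filterMap M.label
  rw [labelSeq_flatten_replicate, (unobsRun_iff.1 hcyc).2] at hv
  replace hv : M.labelSeq v = [] := by simpa using hv
  rw [labelSeq_append, labelSeq_append, (unobsRun_iff.1 hs₁).2, hv, List.append_nil,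
    List.append_nil]
  exact ⟨p.1, ⟨x₀, hx₀, u, rfl, hu⟩, p.2, h₂, hne⟩

end Lassos

section Segments

-- One segment `(x_i, x̄_i) →^{s_i'} (x_{i+1}, x̄_{i+1})` of condition (10).
def SegStep (M : FSA X T O) (p : X × X) (μ : O) (q : X × X) : Prop :=
  p.1 ≠ p.2 ∧ ∃ w, M.CCRun p w q ∧ M.ccLabelSeq w = [μ]

inductive SegPath (M : FSA X T O) : X × X → List O → X × X → Prop
  | nil (p : X × X) : SegPath M p [] p
  | cons {p r q : X × X} {μ : O} {κ : List O} :
      M.SegStep p μ r → SegPath M r κ q → SegPath M p (μ :: κ) q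

namespace SegPath

theorem append {p q r : X × X} {κ κ' : List O} (h : M.SegPath p κ q) (h' : M.SegPath q κ' r) :
    M.SegPath p (κ ++ κ') r := by
  induction h with
  | nil => exact h'
  | cons hs _ ih => exact cons hs (ih h')

theorem flatten_replicate {p : X × X} {κ : List O} (h : M.SegPath p κ p) (j : ℕ) :
    M.SegPath p (List.replicate j κ).flatten p := by
  induction j with
  | zero => exact nil p
  | succ j ih => simpa [List.replicate_succ] using h.append ih

theorem est_nontrivial {σ : List O} {p q : X × X} {κ : List O} (h : M.SegPath p κ q)
    (hp : p.1 ∈ M.est σ ∧ p.2 ∈ M.est σ) {π ρ : List O} (hκ : π ++ ρ = κ) (hρ : ρ ≠ []) :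
    (M.est (σ ++ π)).Nontrivial := by
  induction h generalizing σ π with
  | nil => simp_all
  | @cons p r q μ κ hs _ ih =>
    obtain ⟨hne, w, hw, hμ⟩ := hs
    rcases π with _ | ⟨ν, π⟩
    · exact ⟨p.1, by simpa using hp.1, p.2, by simpa using hp.2, hne⟩
    · simp only [List.cons_append, List.cons.injEq] at hκ
      obtain ⟨rfl, hκ⟩ := hκ
      simpa using ih (σ := σ ++ [ν]) (by simpa [hμ] using mem_est_of_ccRun hp hw) hκ

end SegPath

theorem segPath_ofFn {n : ℕ} {p : Fin (n + 1) → X × X} {s : Fin n → List (CEvent T)}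
    {κ : Fin n → O} (hrun : ∀ i : Fin n, M.CCRun (p i.castSucc) (s i) (p i.succ))
    (hne : ∀ i : Fin n, (p i.castSucc).1 ≠ (p i.castSucc).2)
    (hκ : ∀ i : Fin n, M.ccLabelSeq (s i) = [κ i]) :
    M.SegPath (p 0) (List.ofFn κ) (p (Fin.last n)) := by
  induction n with
  | zero => exact SegPath.nil _
  | succ n ih =>
    rw [List.ofFn_succ]
    exact .cons ⟨hne 0, s 0, hrun 0, hκ 0⟩
      (ih (p := fun i => p i.succ) (fun i => hrun i.succ) (fun i => hne i.succ)
        fun i => hκ i.succ)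

theorem SegPath.exists_fin {p q : X × X} {κ : List O} (h : M.SegPath p κ q) :
    ∃ (ps : Fin (κ.length + 1) → X × X) (s : Fin κ.length → List (CEvent T)),
      ps 0 = p ∧ ps (Fin.last _) = q ∧
      (∀ i : Fin κ.length, M.CCRun (ps i.castSucc) (s i) (ps i.succ)) ∧
      (∀ i : Fin κ.length, (ps i.castSucc).1 ≠ (ps i.castSucc).2) ∧
      ∀ i : Fin κ.length, ∃ μ, M.ccLabelSeq (s i) = [μ] := by
  induction h with
  | nil p =>
    exact ⟨fun _ => p, Fin.elim0, rfl, rfl, fun i => i.elim0, fun i => i.elim0, fun i => i.elim0⟩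
  | cons hs _ ih =>
    obtain ⟨hne, w, hw, hμ⟩ := hs
    obtain ⟨ps, s, rfl, rfl, hrun, hne', hlab⟩ := ih
    refine ⟨Fin.cons _ ps, Fin.cons w s, rfl, rfl, Fin.cases ?_ ?_, Fin.cases ?_ ?_,
      Fin.cases ⟨_, hμ⟩ ?_⟩
    all_goals simp_all

theorem exists_run_flatten_replicate_of_transGen {κ : List O} {y z : X}
    (h : TransGen (fun a b => ∃ v, M.Run a v b ∧ M.labelSeq v = κ) y z) :
    ∃ m c, M.Run y c z ∧ M.labelSeq c = (List.replicate (m + 1) κ).flatten := by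
  induction h with
  | single hv =>
    obtain ⟨v, hv, hℓ⟩ := hv
    exact ⟨0, v, hv, by simp [hℓ]⟩
  | tail _ hv ih =>
    obtain ⟨v, hv, hℓ⟩ := hv
    obtain ⟨m, c, hc, hcℓ⟩ := ih
    exact ⟨m + 1, c ++ v, run_append.2 ⟨_, hc, hv⟩,
      by rw [labelSeq_append, hcℓ, hℓ, List.replicate_succ' (n := m + 1), List.flatten_concat]⟩

theorem not_spd_of_segPath_cycle [Fintype X] {p : X × X} {κ : List O} (hp : M.CCReachable p)
    (hcyc : M.SegPath p κ p) (hκ : κ ≠ []) : ¬ M.SPD := by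
  obtain ⟨σ, hp⟩ := ccReachable_iff.1 hp
  have hest : ∀ j π, π <+: (List.replicate j κ).flatten → (M.est (σ ++ π)).Nontrivial := by
    rintro j π ⟨ρ, hρ⟩
    refine (hcyc.flatten_replicate (j + 1)).est_nontrivial hp (ρ := ρ ++ κ) ?_ (by simp [hκ])
    rw [← List.append_assoc, hρ, List.replicate_succ', List.flatten_concat]
  obtain ⟨b, hb⟩ := (hest (Fintype.card X) _ List.prefix_rfl).nonempty
  obtain ⟨j, y, hy, hyy⟩ := exists_transGen_cycle_of_chain
    (R := fun a b => ∃ v, M.Run a v b ∧ M.labelSeq v = κ)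
    (P := fun j y => y ∈ M.est (σ ++ (List.replicate j κ).flatten)) le_rfl
    (fun j _ b hb => by
      rw [List.replicate_succ', List.flatten_concat, ← List.append_assoc] at hb
      exact mem_est_append_iff.1 hb) hb
  obtain ⟨m, c, hc, hcℓ⟩ := exists_run_flatten_replicate_of_transGen hyy
  obtain ⟨x₀, hx₀, u, hu, hru⟩ := hy
  have hc₀ : c ≠ [] := by
    rintro rfl
    simp [List.replicate_succ, hκ] at hcℓ
  refine not_spd_of_lasso hx₀ hru hc hc₀ fun q v hv => ?_
  have hv : M.labelSeq v <+: (List.replicate ((m + 1) * q) κ).flatten := by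
    rw [← List.flatten_replicate_flatten_replicate, ← hcℓ, ← labelSeq_flatten_replicate]
    exact hv.filterMap M.label
  rw [labelSeq_append, hu, List.append_assoc]
  refine hest (j + (m + 1) * q) _ ?_
  rw [List.replicate_add, List.flatten_append]
  exact (List.prefix_append_right_inj _).2 hv

end Segments

section BackwardChains

def SilentStep (M : FSA X T O) (p q : X × X) : Prop :=
  p.1 ≠ p.2 ∧ ∃ u v, M.UnobsRun p.1 u q.1 ∧ M.UnobsRun p.2 v q.2 ∧ u ++ v ≠ []

def PairStep (M : FSA X T O) (p q : X × X) : Prop :=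
  (∃ μ, M.SegStep p μ q) ∨ M.SilentStep p q

theorem SilentStep.segStep {p r q : X × X} {μ : O} (h : M.SilentStep p r)
    (h' : M.SegStep r μ q) : M.SegStep p μ q := by
  obtain ⟨hne, u, v, hu, hv, -⟩ := h
  obtain ⟨-, w, hw, hμ⟩ := h'
  exact ⟨hne, _, ccRun_append (ccRun_of_unobsRun hu hv) hw, by simp [hμ]⟩

theorem PairStep.exists_ccRun {p q : X × X} (h : M.PairStep p q) : ∃ w, M.CCRun p w q := by
  rcases h with ⟨μ, -, w, hw, -⟩ | ⟨-, u, v, hu, hv, -⟩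
  · exact ⟨w, hw⟩
  · exact ⟨_, ccRun_of_unobsRun hu hv⟩

theorem pairStep_of_ccTrans {p r : X × X} {e : CEvent T} {a' b' : X} {u v : List T}
    (hne : p.1 ≠ p.2) (he : M.ccTrans p e r) (hu : M.UnobsRun r.1 u a')
    (hv : M.UnobsRun r.2 v b') : M.PairStep p (a', b') := by
  cases e with
  | both t t' =>
    obtain ⟨μ, hμ, -⟩ := he.2.2
    exact .inl ⟨μ, hne, _, ccRun_cons.2 ⟨r, .inl he, ccRun_of_unobsRun hu hv⟩,
      by simp [ccLabelSeq_cons, cLabel, hμ]⟩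
  | left t =>
    obtain ⟨ht, hℓ, h₂⟩ := he
    exact .inr ⟨hne, t :: u, v, unobsRun_cons.2 ⟨hℓ, r.1, ht, hu⟩, h₂ ▸ hv, by simp⟩
  | right t =>
    obtain ⟨h₁, hℓ, ht⟩ := he
    exact .inr ⟨hne, u, t :: v, h₁ ▸ hu, unobsRun_cons.2 ⟨hℓ, r.2, ht, hv⟩, by simp⟩
  | eps => exact he.elim

theorem exists_pairStep_of_mem_est_concat {σ : List O} {μ : O} {a' b' : X}
    (hσ : (M.est σ).Nontrivial) (ha : a' ∈ M.est (σ ++ [μ])) (hb : b' ∈ M.est (σ ++ [μ])) :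
    ∃ p : X × X, p.1 ∈ M.est σ ∧ p.2 ∈ M.est σ ∧ M.PairStep p (a', b') := by
  obtain ⟨c, hc, t, a₁, u, hct, hμ, hu⟩ := exists_of_mem_est_concat ha
  obtain ⟨d, hd, t', b₁, v, hdt, hμ', hv⟩ := exists_of_mem_est_concat hb
  have hboth : M.ccTrans (c, d) (.both t t') (a₁, b₁) := ⟨hct, hdt, μ, hμ, hμ'⟩
  by_cases hcd : c = d
  · subst hcd
    obtain ⟨e, he, hne⟩ := hσ.exists_ne c
    by_cases hmatch : ∃ t'', M.ccTrans (c, e) t'' (a₁, b₁)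
    · obtain ⟨t'', ht''⟩ := hmatch
      exact ⟨(c, e), hc, he, pairStep_of_ccTrans hne.symm ht'' hu hv⟩
    -- `(c, e)` cannot follow `(c, c)` into `(a₁, b₁)`, so the ε-transition `(c, e) → (c, c)` exists
    have heps : M.ccEpsTrans (c, e) .eps (c, c) :=
      .inr ⟨rfl, hne.symm, .inl rfl, _, _, hboth, fun t'' h => hmatch ⟨t'', h⟩⟩
    refine ⟨(c, e), hc, he, .inl ⟨μ, hne.symm, _,
      ccRun_cons.2 ⟨_, heps, ccRun_cons.2 ⟨_, .inl hboth, ccRun_of_unobsRun hu hv⟩⟩, ?_⟩⟩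
    simp [ccLabelSeq_cons, cLabel, hμ]
  · exact ⟨(c, d), hc, hd, pairStep_of_ccTrans hcd hboth hu hv⟩

theorem CCReachable.of_reflTransGen {p q : X × X} (hp : M.CCReachable p)
    (h : ReflTransGen M.PairStep p q) : M.CCReachable q := by
  induction h with
  | refl => exact hp
  | tail _ hstep ih =>
    obtain ⟨w, hw⟩ := hstep.exists_ccRun
    exact ih.of_ccRun hw

theorem exists_unobsRun_of_transGen_silentStep {p q : X × X}
    (h : TransGen M.SilentStep p q) :
    ∃ u v, M.UnobsRun p.1 u q.1 ∧ M.UnobsRun p.2 v q.2 ∧ u ++ v ≠ [] := by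
  induction h with
  | single h => exact h.2
  | tail _ h ih =>
    obtain ⟨u, v, hu, hv, huv⟩ := ih
    obtain ⟨-, u', v', hu', hv', -⟩ := h
    exact ⟨u ++ u', v ++ v', hu.append hu', hv.append hv', by simp_all⟩

theorem exists_segPath_of_reflTransGen {a b c : X × X} {κ : List O}
    (h : ReflTransGen M.PairStep a b) (hpath : M.SegPath b κ c) (hκ : κ ≠ []) :
    ∃ κ', κ' ≠ [] ∧ M.SegPath a κ' c := by
  induction h using ReflTransGen.head_induction_on with
  | refl => exact ⟨κ, hκ, hpath⟩
  | head hstep _ ih =>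
    obtain ⟨κ', hκ', hpath'⟩ := ih
    rcases hstep with ⟨μ, hseg⟩ | hsilent
    · exact ⟨μ :: κ', by simp, .cons hseg hpath'⟩
    · cases hpath' with
      | nil => exact absurd rfl hκ'
      | cons hseg hrest => exact ⟨_, hκ', .cons (hsilent.segStep hseg) hrest⟩

theorem transGen_silentStep_or_exists_segStep {a b : X × X} (h : TransGen M.PairStep a b) :
    TransGen M.SilentStep a b ∨ ∃ r μ r', ReflTransGen M.PairStep a r ∧ M.SegStep r μ r' ∧
      ReflTransGen M.PairStep r' b := by
  induction h with
  | single h =>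
    rcases h with ⟨μ, h⟩ | h
    · exact .inr ⟨_, μ, _, .refl, h, .refl⟩
    · exact .inl (.single h)
  | tail _ h ih =>
    rcases ih with hsilent | ⟨r, μ, r', h₁, hseg, h₂⟩
    · rcases h with ⟨μ, h⟩ | h
      · have hpair :=
          ReflTransGen.mono (p := M.PairStep) (fun _ _ => .inr) _ _ hsilent.to_reflTransGen
        exact .inr ⟨_, μ, _, hpair, h, .refl⟩
      · exact .inl (hsilent.tail h)
    · exact .inr ⟨r, μ, r', h₁, hseg, h₂.tail h⟩

theorem exists_unobsCycle_or_segPath_cycle_of_transGen {p : X × X} (hp : M.CCReachable p)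
    (h : TransGen M.PairStep p p) :
    (∃ q : X × X, M.CCReachable q ∧ q.1 ≠ q.2 ∧ M.ReachesUnobsCycle q.1) ∨
      ∃ q, M.CCReachable q ∧ ∃ κ, κ ≠ [] ∧ M.SegPath q κ q := by
  rcases transGen_silentStep_or_exists_segStep h with hsilent | ⟨r, μ, r', h₁, hseg, h₂⟩
  · left
    obtain ⟨_, ⟨hne, -⟩, -⟩ := TransGen.head'_iff.1 hsilent
    obtain ⟨u, v, hu, hv, huv⟩ := exists_unobsRun_of_transGen_silentStep hsilent
    have nil_run {x : X} : M.UnobsRun x [] x := unobsRun_iff.2 ⟨rfl, rfl⟩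
    by_cases hu₀ : u = []
    · exact ⟨p.swap, hp.swap, hne.symm, p.2, [], v, nil_run, by simpa [hu₀] using huv, hv⟩
    · exact ⟨p, hp, hne, p.1, [], u, nil_run, hu₀, hu⟩
  · right
    obtain ⟨w, hw, -⟩ := hseg.2
    refine ⟨r', (hp.of_reflTransGen h₁).of_ccRun hw, ?_⟩
    exact exists_segPath_of_reflTransGen (h₂.trans h₁) (.cons hseg (.nil r')) (by simp)

theorem exists_isInfRun_of_not_spd [Finite X] (h : ¬ M.SPD) {k : ℕ} (hk : 0 < k) :
    ∃ (σ : List O) (ys : ℕ → X) (t : Stream' T), ys 0 ∈ M.est σ ∧ M.IsInfRun ys t ∧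
      ∀ n τ, τ <+: M.labelSeq (t.take n) → τ.length < k → (M.est (σ ++ τ)).Nontrivial := by
  obtain ⟨s, ⟨xs, hx₀, hxs⟩, s', hs', hbad⟩ : ∃ s : Stream' T, M.InLomega s ∧
      ∃ s', IsPrefixOf s' s ∧ ∀ s'', (M.labelSeq s'').length < k → IsPrefixOf (s' ++ s'') s →
        (M.est (M.labelSeq (s' ++ s''))).ncard ≠ 1 := by
    by_contra hc
    push Not at hc
    exact h ⟨k, hk, hc⟩
  have hxs : M.IsInfRun xs s := hxs
  have hs' : s.take s'.length = s' := isPrefixOf_iff_take.1 hs'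
  have hys₀ : xs (s'.length + 0) ∈ M.est (M.labelSeq s') := by
    have hrun := hxs.run_take s'.length
    rw [hs'] at hrun
    exact ⟨xs 0, hx₀, s', rfl, hrun⟩
  refine ⟨_, _, s.drop s'.length, hys₀, hxs.drop s'.length, fun n τ hτ hlen => ?_⟩
  obtain ⟨v, hv, rfl⟩ := exists_prefix_labelSeq_eq hτ
  have hv : (s.drop s'.length).take v.length = v := by
    conv_rhs => rw [List.prefix_iff_eq_take.1 hv]
    rw [Stream'.take_take, Nat.min_eq_right (by simpa using hv.length_le)]
  have hmem := mem_est_of_run hys₀ ((hxs.drop s'.length).run_take v.length)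
  have hne := hbad v hlen (isPrefixOf_iff_take.2 (by
    rw [List.length_append, Stream'.take_add, hs', hv]))
  rw [hv] at hmem
  rw [labelSeq_append] at hne
  by_contra hnt
  rw [Set.not_nontrivial_iff] at hnt
  exact hne (by rw [hnt.eq_singleton_of_mem hmem, Set.ncard_singleton])

theorem exists_labelSeq_take_drop_eq_nil {t : Stream' T} {B : ℕ}
    (h : ∀ n, (M.labelSeq (t.take n)).length ≤ B) :
    ∃ a, ∀ j, M.labelSeq ((t.drop a).take j) = [] := by
  have hbdd : BddAbove (Set.range fun n => (M.labelSeq (t.take n)).length) :=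
    ⟨B, by rintro _ ⟨n, rfl⟩; exact h n⟩
  obtain ⟨a, ha⟩ := Nat.sSup_mem (Set.range_nonempty _) hbdd
  refine ⟨a, fun j => List.eq_nil_of_length_eq_zero ?_⟩
  have hle := le_csSup hbdd ⟨a + j, rfl⟩
  simp only [← ha, Stream'.take_add, labelSeq_append, List.length_append] at hle
  omega

theorem IsInfRun.reachesUnobsCycle [Finite X] {ys : ℕ → X} {t : Stream' T}
    (h : M.IsInfRun ys t) (hℓ : ∀ j, M.labelSeq (t.take j) = []) :
    M.ReachesUnobsCycle (ys 0) := by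
  obtain ⟨i, j, hij, heq⟩ :=
    Set.finite_univ.exists_lt_map_eq_of_forall_mem (f := ys) fun _ => Set.mem_univ _
  have hsplit : t.take j = t.take i ++ (t.drop i).take (j - i) := by
    rw [← Stream'.take_add, Nat.add_sub_cancel' hij.le]
  have hℓ₂ : M.labelSeq ((t.drop i).take (j - i)) = [] := by
    have := hℓ j
    rw [hsplit, labelSeq_append] at this
    exact (List.append_eq_nil_iff.1 this).2
  have hrun := (h.drop i).run_take (j - i)
  simp only [Nat.add_zero, Nat.add_sub_cancel' hij.le, ← heq] at hrun
  refine ⟨ys i, t.take i, (t.drop i).take (j - i), unobsRun_iff.2 ⟨h.run_take i, hℓ i⟩, ?_,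
    unobsRun_iff.2 ⟨hrun, hℓ₂⟩⟩
  rw [← List.length_pos_iff, Stream'.length_take]
  omega

theorem exists_transGen_pairStep [Fintype X] {σ τ : List O}
    (hlen : Fintype.card (X × X) ≤ τ.length)
    (hτ : ∀ j ≤ Fintype.card (X × X), (M.est (σ ++ τ.take j)).Nontrivial) :
    ∃ p, M.CCReachable p ∧ TransGen M.PairStep p p := by
  let P (j : ℕ) (p : X × X) : Prop := p.1 ∈ M.est (σ ++ τ.take j) ∧ p.2 ∈ M.est (σ ++ τ.take j)
  have hback : ∀ j < Fintype.card (X × X), ∀ q, P (j + 1) q → ∃ p, P j p ∧ M.PairStep p q := by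
    rintro j hj ⟨a, b⟩ ⟨ha, hb⟩
    rw [List.take_succ_eq_append_getElem (by omega), ← List.append_assoc] at ha hb
    obtain ⟨p, h₁, h₂, hstep⟩ := exists_pairStep_of_mem_est_concat (hτ j hj.le) ha hb
    exact ⟨p, ⟨h₁, h₂⟩, hstep⟩
  obtain ⟨a, ha⟩ := (hτ _ le_rfl).nonempty
  obtain ⟨j, p, ⟨h₁, h₂⟩, hp⟩ :=
    exists_transGen_cycle_of_chain le_rfl hback (b := (a, a)) ⟨ha, ha⟩
  exact ⟨p, ccReachable_iff.2 ⟨_, h₁, h₂⟩, hp⟩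

theorem exists_unobsCycle_or_segPath_cycle_of_not_spd [Fintype X] (h : ¬ M.SPD) :
    (∃ q : X × X, M.CCReachable q ∧ q.1 ≠ q.2 ∧ M.ReachesUnobsCycle q.1) ∨
      ∃ q, M.CCReachable q ∧ ∃ κ, κ ≠ [] ∧ M.SegPath q κ q := by
  obtain ⟨σ, ys, t, hys₀, hys, hest⟩ :=
    exists_isInfRun_of_not_spd h (k := Fintype.card (X × X) + 1) (Nat.succ_pos _)
  by_cases hlong : ∃ n, Fintype.card (X × X) ≤ (M.labelSeq (t.take n)).length
  · obtain ⟨n, hn⟩ := hlong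
    obtain ⟨p, hp, hcyc⟩ := exists_transGen_pairStep hn fun j hj =>
      hest n _ (List.take_prefix _ _) (by rw [List.length_take]; omega)
    exact exists_unobsCycle_or_segPath_cycle_of_transGen hp hcyc
  · push Not at hlong
    obtain ⟨a, ha⟩ := exists_labelSeq_take_drop_eq_nil fun n => (hlong n).le
    have hya : ys a ∈ M.est (σ ++ M.labelSeq (t.take a)) := mem_est_of_run hys₀ (hys.run_take a)
    obtain ⟨z, hz, hne⟩ := (hest a _ List.prefix_rfl (by have := hlong a; omega)).exists_ne (ys a)
    exact .inl ⟨(ys a, z), ccReachable_iff.2 ⟨_, hya, hz⟩, hne.symm,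
      by simpa using (hys.drop a).reachesUnobsCycle ha⟩

end BackwardChains

end FSA

theorem not_spd_iff_cc_general {X T O : Type} [Fintype X]
    (M : FSA X T O) :
    ¬ M.SPD ↔
      ((∃ p : X × X, M.CCReachable p ∧ p.1 ≠ p.2 ∧
          ∃ (x' : X) (s1 s2 : List T),
            M.UnobsRun p.1 s1 x' ∧ s2 ≠ [] ∧ M.UnobsRun x' s2 x') ∨
       (∃ (n : ℕ), 0 < n ∧
          ∃ (p : Fin (n + 1) → X × X) (s : Fin n → List (CEvent T)),
            M.CCReachable (p 0) ∧ p 0 = p (Fin.last n) ∧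
            (∀ i : Fin n, M.CCRun (p i.castSucc) (s i) (p i.succ)) ∧
            (∀ i : Fin n, (p i.castSucc).1 ≠ (p i.castSucc).2) ∧
            ∀ i : Fin n, ∃ σ : O, M.ccLabelSeq (s i) = [σ])) := by
  constructor
  · intro h
    rcases FSA.exists_unobsCycle_or_segPath_cycle_of_not_spd h with h9 | ⟨p, hp, κ, hκ, hcyc⟩
    · exact .inl h9
    · obtain ⟨ps, s, rfl, hlast, hrun, hne, hlab⟩ := hcyc.exists_fin
      exact .inr ⟨κ.length, List.length_pos_iff.2 hκ, ps, s, hp, hlast.symm, hrun, hne, hlab⟩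
  · rintro (⟨p, hp, hne, hcyc⟩ | ⟨n, hn, p, s, hp, hcyc, hrun, hne, hlab⟩)
    · exact FSA.not_spd_of_reachesUnobsCycle hp hne hcyc
    · choose κ hκ using hlab
      have hpath := FSA.segPath_ofFn hrun hne hκ
      rw [← hcyc] at hpath
      exact FSA.not_spd_of_segPath_cycle hp hpath (by simpa using hn.ne')

/-- `S` is not SPD iff in `CC^ε_A(S)`: (9) there is a reachable state
`(x,x̄)` with `x ≠ x̄` and a transition sequence `x →^{s1} x' →^{s2} x'` in `S` with
`s1 ∈ (T_uo)*`, `s2 ∈ (T_uo)^+`; or (10) there is a reachable transition cycle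
`(x1,x̄1) →^{s1'} ⋯ →^{sn'} (x_{n+1},x̄_{n+1})` with `(x1,x̄1) = (x_{n+1},x̄_{n+1})`,
`x_i ≠ x̄_i`, and `ℓ(s_i') ∈ Σ` for all `i ∈ {1,…,n}`. -/
theorem not_spd_iff_cc {X T O : Type} [Fintype X] [Fintype T] [Fintype O]
    (M : FSA X T O) :
    ¬ M.SPD ↔
      ((∃ p : X × X, M.CCReachable p ∧ p.1 ≠ p.2 ∧
          ∃ (x' : X) (s1 s2 : List T),
            M.UnobsRun p.1 s1 x' ∧ s2 ≠ [] ∧ M.UnobsRun x' s2 x') ∨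
       (∃ (n : ℕ), 0 < n ∧
          ∃ (p : Fin (n + 1) → X × X) (s : Fin n → List (CEvent T)),
            M.CCReachable (p 0) ∧ p 0 = p (Fin.last n) ∧
            (∀ i : Fin n, M.CCRun (p i.castSucc) (s i) (p i.succ)) ∧
            (∀ i : Fin n, (p i.castSucc).1 ≠ (p i.castSucc).2) ∧
            ∀ i : Fin n, ∃ σ : O, M.ccLabelSeq (s i) = [σ])) :=
  not_spd_iff_cc_general M
end

section
/- Let S be an FSA with observer S_obs and detector S_det. The following are equivalent: (i) there are a reachable state q' of S_det and x∈q' such that |q'|>1 and there is a transition sequence x→^{s1}x'→^{s2}x' in S for some s1∈(T_uo)*, s2∈(T_uo)^+, x'∈X; (ii) there are a reachable state q of S_obs and x∈q such that |q|>1 and there is a transition sequence x→^{s1}x'→^{s2}x' in S for some s1∈(T_uo)*, s2∈(T_uo)^+, x'∈X. -/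
/-
A detector state is a subset of the observer state reached by the same observation, so a
detector state of size `> 1` lies inside an observer state of size `> 1`. Conversely, given two
distinct states `x, y` in a reachable observer state, trace them back along the observation: at
each step the detector may keep exactly the two predecessors being tracked (or the whole
successor set when that is a singleton), so it reaches a state containing both `x` and `y`.
-/

theorem Set.exists_ncard_eq_two_of_mem {α : Type*} {s : Set α} (hs : 1 < s.ncard)
    {a b : α} (ha : a ∈ s) (hb : b ∈ s) : ∃ p ⊆ s, p.ncard = 2 ∧ a ∈ p ∧ b ∈ p := by
  by_cases hab : a = b
  · subst hab
    obtain ⟨z, hz, hza⟩ := Set.exists_ne_of_one_lt_ncard hs a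
    exact ⟨{a, z}, Set.insert_subset ha (Set.singleton_subset_iff.2 hz),
      Set.ncard_pair hza.symm, Set.mem_insert a _, Set.mem_insert a _⟩
  · exact ⟨{a, b}, Set.insert_subset ha (Set.singleton_subset_iff.2 hb),
      Set.ncard_pair hab, Set.mem_insert a _, Set.mem_insert_of_mem a rfl⟩

namespace FSA

variable {X T O : Type} (M : FSA X T O)

theorem UR_ReachO_mono (σ : O) {d Q : Set X} (h : d ⊆ Q) :
    M.UR (M.ReachO σ d) ⊆ M.UR (M.ReachO σ Q) := by
  rintro x ⟨z, ⟨a, ha, t, hd, hl⟩, s, hs⟩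
  exact ⟨z, ⟨a, h ha, t, hd, hl⟩, s, hs⟩

theorem detTrans_subset {q q' : Set X} {σ : O} (h : M.detTrans q σ q') :
    q' ⊆ M.UR (M.ReachO σ q) := by
  rcases h with ⟨-, hsub, -⟩ | ⟨-, rfl⟩
  exacts [hsub, subset_rfl]

theorem detTrans_nonempty {q q' : Set X} {σ : O} (h : M.detTrans q σ q') :
    (M.UR (M.ReachO σ q)).Nonempty := by
  rcases h with ⟨h1, -⟩ | ⟨h1, -⟩ <;> exact Set.nonempty_of_ncard_ne_zero (by omega)

theorem DetRun.exists_obsRun_superset {w : List O} {d q' : Set X} (h : M.DetRun d w q')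
    {Q : Set X} (hdQ : d ⊆ Q) : ∃ Q', M.ObsRun Q w Q' ∧ q' ⊆ Q' := by
  induction w generalizing d Q with
  | nil => exact ⟨Q, rfl, h ▸ hdQ⟩
  | cons σ w ih =>
    obtain ⟨d1, hstep, hrun⟩ := h
    have hmono := M.UR_ReachO_mono σ hdQ
    obtain ⟨Q', hQ', hq'⟩ := ih hrun ((M.detTrans_subset hstep).trans hmono)
    exact ⟨Q', ⟨_, ⟨rfl, (M.detTrans_nonempty hstep).mono hmono⟩, hQ'⟩, hq'⟩

theorem exists_detTrans_of_mem [Finite X] {d : Set X} {σ : O} {a b : X}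
    (ha : a ∈ M.UR (M.ReachO σ d)) (hb : b ∈ M.UR (M.ReachO σ d)) :
    ∃ d1, M.detTrans d σ d1 ∧ a ∈ d1 ∧ b ∈ d1 := by
  rcases (Nat.succ_le_of_lt ((Set.ncard_pos (Set.toFinite _)).2 ⟨a, ha⟩)).eq_or_lt with h1 | h1
  · exact ⟨_, Or.inr ⟨h1.symm, rfl⟩, ha, hb⟩
  · obtain ⟨p, hp, hp2, hap, hbp⟩ := Set.exists_ncard_eq_two_of_mem h1 ha hb
    exact ⟨p, Or.inl ⟨h1, hp, hp2⟩, hap, hbp⟩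

theorem ObsRun.exists_detRun_of_mem [Finite X] {w : List O} {Q q : Set X}
    (h : M.ObsRun Q w q) {x y : X} (hx : x ∈ q) (hy : y ∈ q) :
    ∃ a ∈ Q, ∃ b ∈ Q, ∀ d : Set X, a ∈ d → b ∈ d →
      ∃ d', M.DetRun d w d' ∧ x ∈ d' ∧ y ∈ d' := by
  induction w generalizing Q with
  | nil => exact ⟨x, h ▸ hx, y, h ▸ hy, fun d hxd hyd => ⟨d, rfl, hxd, hyd⟩⟩
  | cons σ w ih =>
    obtain ⟨Q1, ⟨rfl, -⟩, hrun⟩ := h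
    obtain ⟨a1, ⟨za, ⟨a, haQ, ta, hda, hla⟩, sa, hsa⟩,
      b1, ⟨zb, ⟨b, hbQ, tb, hdb, hlb⟩, sb, hsb⟩, htrack⟩ := ih hrun
    refine ⟨a, haQ, b, hbQ, fun d had hbd => ?_⟩
    obtain ⟨d1, hstep, ha1, hb1⟩ := M.exists_detTrans_of_mem
      ⟨za, ⟨a, had, ta, hda, hla⟩, sa, hsa⟩ ⟨zb, ⟨b, hbd, tb, hdb, hlb⟩, sb, hsb⟩
    obtain ⟨d', hd', hxd', hyd'⟩ := htrack d1 ha1 hb1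
    exact ⟨d', ⟨d1, hstep, hd'⟩, hxd', hyd'⟩

theorem exists_detReachable_one_lt_ncard_iff [Finite X] (P : X → Prop) :
    (∃ q' : Set X, M.DetReachable q' ∧ 1 < q'.ncard ∧ ∃ x ∈ q', P x) ↔
      ∃ q : Set X, M.ObsReachable q ∧ 1 < q.ncard ∧ ∃ x ∈ q, P x := by
  constructor
  · rintro ⟨q', ⟨w, hrun⟩, hcard, x, hx, hP⟩
    obtain ⟨Q', hQ', hsub⟩ := hrun.exists_obsRun_superset M subset_rfl
    exact ⟨Q', ⟨w, hQ'⟩, hcard.trans_le (Set.ncard_le_ncard hsub), x, hsub hx, hP⟩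
  · rintro ⟨q, ⟨w, hrun⟩, hcard, x, hx, hP⟩
    obtain ⟨y, hy, hyx⟩ := Set.exists_ne_of_one_lt_ncard hcard x
    obtain ⟨a, ha, b, hb, htrack⟩ := hrun.exists_detRun_of_mem M hx hy
    obtain ⟨d', hd', hxd', hyd'⟩ := htrack M.obsInit ha hb
    exact ⟨d', ⟨w, hd'⟩, (Set.one_lt_ncard_iff d'.toFinite).2 ⟨x, y, hxd', hyd', hyx.symm⟩,
      x, hxd', hP⟩

end FSA

theorem detector_iff_observer_unobs_cycle_general {X T O : Type} [Fintype X]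
    (M : FSA X T O) :
    (∃ q' : Set X, M.DetReachable q' ∧ 1 < q'.ncard ∧
        ∃ x ∈ q', ∃ (x' : X) (s1 s2 : List T),
          M.UnobsRun x s1 x' ∧ s2 ≠ [] ∧ M.UnobsRun x' s2 x') ↔
    (∃ q : Set X, M.ObsReachable q ∧ 1 < q.ncard ∧
        ∃ x ∈ q, ∃ (x' : X) (s1 s2 : List T),
          M.UnobsRun x s1 x' ∧ s2 ≠ [] ∧ M.UnobsRun x' s2 x') :=
  M.exists_detReachable_one_lt_ncard_iff _

/-- Equivalence of condition (5) on the detector and condition (3) on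
the observer: a reachable state containing a state `x` of `S` from which a reachable
unobservable transition cycle starts, the state having cardinality `> 1`. -/
theorem detector_iff_observer_unobs_cycle {X T O : Type} [Fintype X] [Fintype T] [Fintype O]
    (M : FSA X T O) :
    (∃ q' : Set X, M.DetReachable q' ∧ 1 < q'.ncard ∧
        ∃ x ∈ q', ∃ (x' : X) (s1 s2 : List T),
          M.UnobsRun x s1 x' ∧ s2 ≠ [] ∧ M.UnobsRun x' s2 x') ↔
    (∃ q : Set X, M.ObsReachable q ∧ 1 < q.ncard ∧
        ∃ x ∈ q, ∃ (x' : X) (s1 s2 : List T),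
          M.UnobsRun x s1 x' ∧ s2 ≠ [] ∧ M.UnobsRun x' s2 x') :=
  detector_iff_observer_unobs_cycle_general M
end

section
/- Let S be an FSA with observer S_obs and detector S_det. The following are equivalent: (i) S_det has a reachable transition cycle all of whose states have cardinality 2; (ii) S_obs has a reachable transition cycle in which no state is a singleton. -/
/-!
In a finite transition system, a reachable cycle through states satisfying `P` exists iff
there are runs from the initial state with arbitrarily long stretches of `P`-states: unroll
the cycle, or conversely apply the pigeonhole principle to a stretch longer than the number
of states.

Along a common label sequence the observer state always contains the detector state, so
long detector runs through 2-sets give long observer runs through non-singletons.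
Conversely, every point of an observer state has a predecessor in the previous observer
state; hence a 2-subset (or the whole singleton) of an observer state can be pulled back to a
2-subset (or the whole singleton) of the previous one which the detector maps onto it.
Pulling back from the end of a long observer run gives a detector run from `M(S,ε)`.
-/

namespace TransitionSystem

variable {α β : Type*}

def Walk (R : α → β → α → Prop) : α → List β → α → Prop
  | a, [], b => a = b
  | a, σ :: w, b => ∃ c, R a σ c ∧ Walk R c w b

def HasReachableCycle (R : α → β → α → Prop) (a₀ : α) (P : α → Prop) : Prop :=
  ∃ n, 0 < n ∧ ∃ (q : Fin (n + 1) → α) (σ : Fin n → β),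
    (∃ w, Walk R a₀ w (q 0)) ∧ q 0 = q (Fin.last n) ∧
    (∀ i : Fin n, R (q i.castSucc) (σ i) (q i.succ)) ∧ ∀ i, P (q i)

def HasLongRuns (R : α → β → α → Prop) (a₀ : α) (P : α → Prop) : Prop :=
  ∀ K, ∃ (N : ℕ) (f : ℕ → α) (g : ℕ → β), f 0 = a₀ ∧
    (∀ j < N + K, R (f j) (g j) (f (j + 1))) ∧ ∀ j, N ≤ j → j ≤ N + K → P (f j)

def HasRunEventually (R : α → β → α → Prop) (a : α) (P : α → Prop) : Prop :=
  ∃ (f : ℕ → α) (g : ℕ → β) (N : ℕ),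
    f 0 = a ∧ (∀ j, R (f j) (g j) (f (j + 1))) ∧ ∀ j, N ≤ j → P (f j)

variable {R : α → β → α → Prop} {P : α → Prop}

theorem walk_of_run {n : ℕ} {f : ℕ → α} {g : ℕ → β} (h : ∀ j < n, R (f j) (g j) (f (j + 1))) :
    Walk R (f 0) ((List.range n).map g) (f n) := by
  induction n generalizing f g with
  | zero => rfl
  | succ n ih =>
    rw [List.range_succ_eq_map, List.map_cons, List.map_map]
    exact ⟨f 1, h 0 n.succ_pos, ih (f := fun j => f (j + 1)) fun j hj => h (j + 1) (by omega)⟩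

open Fin.NatCast in
theorem hasRunEventually_of_cycle {n : ℕ} (hn : 0 < n) {q : Fin (n + 1) → α} {σ : Fin n → β}
    (hq : q 0 = q (Fin.last n)) (ht : ∀ i : Fin n, R (q i.castSucc) (σ i) (q i.succ))
    (hP : ∀ i, P (q i)) : HasRunEventually R (q 0) P := by
  obtain ⟨k, rfl⟩ : ∃ k, n = k + 1 := ⟨n - 1, by omega⟩
  refine ⟨fun j => q (j : Fin (k + 1)).castSucc, fun j => σ (j : Fin (k + 1)), 0, rfl,
    fun j => ?_, fun j _ => hP _⟩
  have hsucc : q ((j + 1 : ℕ) : Fin (k + 1)).castSucc = q (j : Fin (k + 1)).succ := by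
    rw [Nat.cast_add_one]
    rcases Fin.eq_castSucc_or_eq_last (j : Fin (k + 1)) with ⟨i, hi⟩ | hi
    · rw [hi, Fin.coeSucc_eq_succ, Fin.succ_castSucc]
    · rw [hi, Fin.last_add_one, Fin.succ_last]; exact hq
  simpa only [hsucc] using ht (j : Fin (k + 1))

theorem HasRunEventually.of_walk {a b : α} {w : List β} (hw : Walk R a w b)
    (h : HasRunEventually R b P) : HasRunEventually R a P := by
  induction w generalizing a with
  | nil => exact hw ▸ h
  | cons σ w ih =>
    obtain ⟨c, hac, hc⟩ := hw
    obtain ⟨f, g, N, rfl, hR, hP⟩ := ih hc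
    refine ⟨fun | 0 => a | j + 1 => f j, fun | 0 => σ | j + 1 => g j, N + 1, rfl, ?_, ?_⟩
    · rintro (_ | j)
      exacts [hac, hR j]
    · rintro (_ | j) hj
      exacts [absurd hj (by omega), hP j (by omega)]

theorem HasReachableCycle.hasRunEventually {a₀ : α} (h : HasReachableCycle R a₀ P) :
    HasRunEventually R a₀ P := by
  obtain ⟨n, hn, q, σ, ⟨w, hw⟩, hq, ht, hP⟩ := h
  exact (hasRunEventually_of_cycle hn hq ht hP).of_walk hw

theorem hasReachableCycle_of_run [Finite α] {a₀ : α} {N : ℕ} {f : ℕ → α} {g : ℕ → β}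
    (h0 : f 0 = a₀) (hR : ∀ j < N + Nat.card α, R (f j) (g j) (f (j + 1)))
    (hP : ∀ j, N ≤ j → j ≤ N + Nat.card α → P (f j)) : HasReachableCycle R a₀ P := by
  obtain ⟨a, b, hab, hb, hfab⟩ : ∃ a b, a < b ∧ b ≤ Nat.card α ∧ f (N + a) = f (N + b) := by
    cases nonempty_fintype α
    obtain ⟨a, b, hne, heq⟩ := Fintype.exists_ne_map_eq_of_card_lt
      (fun i : Fin (Nat.card α + 1) => f (N + i)) (by simp [Nat.card_eq_fintype_card])
    rcases (Fin.val_injective.ne hne).lt_or_gt with h | h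
    · exact ⟨a, b, h, by omega, heq⟩
    · exact ⟨b, a, h, by omega, heq.symm⟩
  refine ⟨b - a, by omega, fun i => f (N + a + i), fun i => g (N + a + i),
    ⟨_, h0 ▸ walk_of_run (n := N + a) fun j hj => hR j (by omega)⟩, ?_, fun i => ?_,
    fun i => hP _ (by omega) (by omega)⟩
  · simpa [show N + a + (b - a) = N + b by omega] using hfab
  · simpa [Nat.add_assoc] using hR (N + a + i) (by omega)

theorem hasReachableCycle_iff [Finite α] {a₀ : α} :
    HasReachableCycle R a₀ P ↔ HasLongRuns R a₀ P := by
  refine ⟨fun h K => ?_, fun h => ?_⟩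
  · obtain ⟨f, g, N, h0, hR, hP⟩ := h.hasRunEventually
    exact ⟨N, f, g, h0, fun j _ => hR j, fun j hj _ => hP j hj⟩
  · obtain ⟨N, f, g, h0, hR, hP⟩ := h (Nat.card α)
    exact hasReachableCycle_of_run h0 hR hP

end TransitionSystem

namespace FSA

open TransitionSystem

variable {X T O : Type}

def IsDetSubset (p Q : Set X) : Prop :=
  (p = Q ∧ Q.ncard = 1) ∨ (p ⊆ Q ∧ p.ncard = 2)

namespace IsDetSubset

variable {p Q : Set X}

theorem subset (h : IsDetSubset p Q) : p ⊆ Q := by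
  rcases h with ⟨rfl, -⟩ | ⟨h, -⟩
  exacts [subset_rfl, h]

theorem nonempty (h : IsDetSubset p Q) : p.Nonempty := by
  apply Set.nonempty_of_ncard_ne_zero
  rcases h with ⟨rfl, h⟩ | ⟨-, h⟩ <;> omega

theorem ncard_le_two (h : IsDetSubset p Q) : p.ncard ≤ 2 := by
  rcases h with ⟨rfl, h⟩ | ⟨-, h⟩ <;> omega

theorem ncard_eq_two (h : IsDetSubset p Q) (hQ : Q.ncard ≠ 1) : p.ncard = 2 := by
  rcases h with ⟨rfl, h⟩ | ⟨-, h⟩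
  exacts [absurd h hQ, h]

theorem mono {Q' : Set X} (h : IsDetSubset p Q) (hQ' : Q' ⊆ Q) (hp : p ⊆ Q') :
    IsDetSubset p Q' := by
  rcases h with ⟨rfl, h⟩ | ⟨-, h⟩
  · obtain rfl := hQ'.antisymm hp
    exact Or.inl ⟨rfl, h⟩
  · exact Or.inr ⟨hp, h⟩

end IsDetSubset

variable (M : FSA X T O)

-- Unlike `obsTrans`, this is total: it is `∅` where the observer has no `σ`-transition.
def obsStep (σ : O) (q : Set X) : Set X := M.UR (M.ReachO σ q)

theorem obsRun_eq_walk : M.ObsRun = Walk M.obsTrans := by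
  funext q w q'
  induction w generalizing q with
  | nil => rfl
  | cons σ w ih => simp only [ObsRun, Walk, ih]

theorem detRun_eq_walk : M.DetRun = Walk M.detTrans := by
  funext q w q'
  induction w generalizing q with
  | nil => rfl
  | cons σ w ih => simp only [DetRun, Walk, ih]

variable {M}

theorem obsStep_mono {σ : O} {q q' : Set X} (h : q ⊆ q') : M.obsStep σ q ⊆ M.obsStep σ q' := by
  rintro x' ⟨z, ⟨x, hx, hxz⟩, hz⟩
  exact ⟨z, ⟨x, h hx, hxz⟩, hz⟩

theorem mem_obsStep_iff {σ : O} {q : Set X} {x' : X} :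
    x' ∈ M.obsStep σ q ↔ ∃ x ∈ q, x' ∈ M.obsStep σ {x} := by
  constructor
  · rintro ⟨z, ⟨x, hx, hxz⟩, hz⟩
    exact ⟨x, hx, z, ⟨x, rfl, hxz⟩, hz⟩
  · rintro ⟨x, hx, hx'⟩
    exact obsStep_mono (Set.singleton_subset_iff.2 hx) hx'

theorem exists_subset_ncard_le_of_subset_obsStep {σ : O} {q s : Set X} (hs : s.Finite)
    (h : s ⊆ M.obsStep σ q) : ∃ A ⊆ q, A.ncard ≤ s.ncard ∧ s ⊆ M.obsStep σ A := by
  choose! f hfq hf using fun x' (hx' : x' ∈ s) => mem_obsStep_iff.1 (h hx')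
  refine ⟨f '' s, Set.image_subset_iff.2 hfq, Set.ncard_image_le hs, fun x' hx' => ?_⟩
  exact obsStep_mono (Set.singleton_subset_iff.2 (Set.mem_image_of_mem f hx')) (hf x' hx')

theorem isDetSubset_of_detTrans {σ : O} {q p : Set X} (h : M.detTrans q σ p) :
    IsDetSubset p (M.obsStep σ q) := by
  rcases h with ⟨-, hp, h2⟩ | ⟨h1, rfl⟩
  exacts [Or.inr ⟨hp, h2⟩, Or.inl ⟨rfl, h1⟩]

theorem detTrans_iff [Finite X] {σ : O} {q p : Set X} :
    M.detTrans q σ p ↔ IsDetSubset p (M.obsStep σ q) := by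
  refine ⟨isDetSubset_of_detTrans, ?_⟩
  rintro (⟨rfl, h1⟩ | ⟨hp, h2⟩)
  · exact Or.inr ⟨h1, rfl⟩
  · have := Set.ncard_le_ncard hp (Set.toFinite _)
    exact Or.inl ⟨(by omega : 1 < (M.obsStep σ q).ncard), hp, h2⟩

theorem exists_isDetSubset_obsStep [Finite X] {σ : O} {Q p' : Set X}
    (h : IsDetSubset p' (M.obsStep σ Q)) :
    ∃ p, IsDetSubset p Q ∧ IsDetSubset p' (M.obsStep σ p) := by
  by_cases hQ : Q.ncard = 1
  · exact ⟨Q, Or.inl ⟨rfl, hQ⟩, h⟩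
  obtain ⟨A, hAQ, hA, hp'A⟩ :=
    exists_subset_ncard_le_of_subset_obsStep (Set.toFinite p') h.subset
  obtain ⟨x, hxQ, -⟩ := mem_obsStep_iff.1 (h.subset h.nonempty.some_mem)
  have hQ2 : 2 ≤ Q.ncard := by
    have := (Set.ncard_pos (Set.toFinite Q)).2 ⟨x, hxQ⟩
    omega
  obtain ⟨p, hAp, hpQ, hp⟩ :=
    Set.exists_subsuperset_card_eq hAQ (hA.trans h.ncard_le_two) hQ2
  exact ⟨p, Or.inr ⟨hpQ, hp⟩, h.mono (obsStep_mono hpQ) (hp'A.trans (obsStep_mono hAp))⟩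

theorem exists_obsRun_superset {L : ℕ} {d : ℕ → Set X} {g : ℕ → O}
    (hd : ∀ j < L, M.detTrans (d j) (g j) (d (j + 1))) :
    ∃ F : ℕ → Set X, F 0 = d 0 ∧ (∀ j < L, M.obsTrans (F j) (g j) (F (j + 1))) ∧
      ∀ j ≤ L, d j ⊆ F j := by
  let F : ℕ → Set X := fun j => Nat.rec (d 0) (fun j Fj => M.obsStep (g j) Fj) j
  have hdF : ∀ j ≤ L, d j ⊆ F j := by
    intro j hj
    induction j with
    | zero => exact subset_rfl
    | succ j ih =>
      exact (isDetSubset_of_detTrans (hd j hj)).subset.trans (obsStep_mono (ih (by omega)))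
  refine ⟨F, rfl, fun j hj => ⟨rfl, ?_⟩, hdF⟩
  exact (isDetSubset_of_detTrans (hd j hj)).nonempty.mono (hdF (j + 1) hj)

theorem exists_detRun_of_obsRun [Finite X] {F : ℕ → Set X} {g : ℕ → O} (L : ℕ)
    (hF : ∀ j ≤ L, F (j + 1) = M.obsStep (g j) (F j)) {p : Set X}
    (hp : IsDetSubset p (F (L + 1))) :
    ∃ d : ℕ → Set X, d 0 = F 0 ∧ d (L + 1) = p ∧
      ∀ j ≤ L, M.detTrans (d j) (g j) (d (j + 1)) ∧ IsDetSubset (d (j + 1)) (F (j + 1)) := by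
  induction L generalizing p with
  | zero =>
    refine ⟨Function.update (fun _ => F 0) 1 p, rfl, by simp, fun j hj => ?_⟩
    obtain rfl : j = 0 := by omega
    simp only [Function.update_self, zero_add]
    exact ⟨detTrans_iff.2 (hF 0 le_rfl ▸ hp), hp⟩
  | succ L ih =>
    obtain ⟨p₀, hp₀, hp₀p⟩ := exists_isDetSubset_obsStep (hF (L + 1) le_rfl ▸ hp)
    obtain ⟨d, hd0, hdL, hd⟩ := ih (fun j hj => hF j (by omega)) hp₀
    refine ⟨Function.update d (L + 2) p, by simp [hd0], by simp, fun j hj => ?_⟩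
    rcases Nat.le_succ_iff.1 hj with hj | rfl
    · rw [Function.update_of_ne (by omega), Function.update_of_ne (by omega)]
      exact hd j hj
    · rw [Function.update_of_ne (by omega), Function.update_self, hdL]
      exact ⟨detTrans_iff.2 hp₀p, hp⟩

theorem hasLongRuns_obsTrans_of_detTrans [Finite X]
    (h : HasLongRuns M.detTrans M.obsInit fun q => q.ncard = 2) :
    HasLongRuns M.obsTrans M.obsInit fun q => q.ncard ≠ 1 := by
  intro K
  obtain ⟨N, d, g, hd0, hd, hd2⟩ := h K
  obtain ⟨F, hF0, hF, hdF⟩ := exists_obsRun_superset hd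
  refine ⟨N, F, g, hF0.trans hd0, hF, fun j hjN hjK => ?_⟩
  have := Set.ncard_le_ncard (hdF j hjK) (Set.toFinite _)
  rw [hd2 j hjN hjK] at this
  omega

theorem hasLongRuns_detTrans_of_obsTrans [Finite X]
    (h : HasLongRuns M.obsTrans M.obsInit fun q => q.ncard ≠ 1) :
    HasLongRuns M.detTrans M.obsInit fun q => q.ncard = 2 := by
  intro K
  obtain ⟨N, F, g, hF0, hF, hF1⟩ := h (K + 1)
  have hlast : 2 ≤ (F (N + K + 1)).ncard := by
    have := (Set.ncard_pos (Set.toFinite _)).2 (hF (N + K) (by omega)).2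
    have := hF1 (N + K + 1) (by omega) (by omega)
    omega
  obtain ⟨p, hpF, hp⟩ := Set.exists_subset_card_eq hlast
  obtain ⟨d, hd0, -, hd⟩ := exists_detRun_of_obsRun (N + K)
    (fun j hj => (hF j (by omega)).1) (p := p) (Or.inr ⟨hpF, hp⟩)
  refine ⟨N + 1, d, g, hd0.trans hF0, fun j hj => (hd j (by omega)).1, fun j hjN hjK => ?_⟩
  obtain ⟨i, rfl⟩ := Nat.exists_eq_add_of_lt hjN
  exact (hd (N + i) (by omega)).2.ncard_eq_two (hF1 _ (by omega) (by omega))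

end FSA

theorem detector_cycle_iff_observer_cycle_general {X T O : Type} [Fintype X]
    (M : FSA X T O) :
    (∃ (n : ℕ), 0 < n ∧ ∃ (q : Fin (n + 1) → Set X) (σ : Fin n → O),
        M.DetReachable (q 0) ∧ q 0 = q (Fin.last n) ∧
        (∀ i : Fin n, M.detTrans (q i.castSucc) (σ i) (q i.succ)) ∧
        ∀ i : Fin (n + 1), (q i).ncard = 2) ↔
    (∃ (n : ℕ), 0 < n ∧ ∃ (q : Fin (n + 1) → Set X) (σ : Fin n → O),
        M.ObsReachable (q 0) ∧ q 0 = q (Fin.last n) ∧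
        (∀ i : Fin n, M.obsTrans (q i.castSucc) (σ i) (q i.succ)) ∧
        ∀ i : Fin (n + 1), (q i).ncard ≠ 1) := by
  simp only [FSA.DetReachable, FSA.ObsReachable, FSA.detRun_eq_walk, FSA.obsRun_eq_walk]
  change TransitionSystem.HasReachableCycle M.detTrans M.obsInit (fun q => q.ncard = 2) ↔
    TransitionSystem.HasReachableCycle M.obsTrans M.obsInit (fun q => q.ncard ≠ 1)
  rw [TransitionSystem.hasReachableCycle_iff, TransitionSystem.hasReachableCycle_iff]
  exact ⟨FSA.hasLongRuns_obsTrans_of_detTrans, FSA.hasLongRuns_detTrans_of_obsTrans⟩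

/-- The detector has a reachable transition cycle all of whose states
have cardinality 2 iff the observer has a reachable transition cycle in which no
state is a singleton. -/
theorem detector_cycle_iff_observer_cycle {X T O : Type} [Fintype X] [Fintype T] [Fintype O]
    (M : FSA X T O) :
    (∃ (n : ℕ), 0 < n ∧ ∃ (q : Fin (n + 1) → Set X) (σ : Fin n → O),
        M.DetReachable (q 0) ∧ q 0 = q (Fin.last n) ∧
        (∀ i : Fin n, M.detTrans (q i.castSucc) (σ i) (q i.succ)) ∧
        ∀ i : Fin (n + 1), (q i).ncard = 2) ↔
    (∃ (n : ℕ), 0 < n ∧ ∃ (q : Fin (n + 1) → Set X) (σ : Fin n → O),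
        M.ObsReachable (q 0) ∧ q 0 = q (Fin.last n) ∧
        (∀ i : Fin n, M.obsTrans (q i.castSucc) (σ i) (q i.succ)) ∧
        ∀ i : Fin (n + 1), (q i).ncard ≠ 1) :=
  detector_cycle_iff_observer_cycle_general M
end
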